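/- arXiv:0810.5546 — 5 statements merged into one kernel-verified Lean document; each statement's English description precedes it below -/
import Mathlib

section
/- Let I be the two-sided ideal of A generated by all commutators ab − ba (a, b ∈ A). Then there is a K-algebra isomorphism from A/I onto the quotient of the commutative polynomial ring K[X_i, Y_i : i ∈ ℤ] by the ideal generated by the elements X_i Y_i − q/(q−1)² and X_{i+1} Y_i − q/(q−1)² (i ∈ ℤ), sending the class of x_i to the class of X_i and the class of y_i to the class of Y_i. -/
/-!
In a commutative algebra the Serre relations (1), (2), (7), (8) and the commutation relations
(3), (6), (9) hold automatically, while (4) and (5) become `(1 - q) x_i y_i = -q/(q-1)` and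
`(1 - q⁻¹) x_{i+1} y_i = 1/(q-1)`, i.e. `x_i y_i = x_{i+1} y_i = q/(q-1)²` since `q ≠ 0, 1`.
Hence `A/I` and `K[X_i, Y_i]/(X_i Y_i - q/(q-1)², X_{i+1} Y_i - q/(q-1)²)` both corepresent
the families `(x_i, y_i)` in commutative `K`-algebras satisfying these two equations, and the
maps matching generators are mutually inverse.
-/

noncomputable section

open FreeAlgebra

/-- The free algebra generator `x_i`. -/
abbrev xF (K : Type) [Field K] (i : ℤ) : FreeAlgebra K (ℤ ⊕ ℤ) :=
  FreeAlgebra.ι K (Sum.inl i)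

/-- The free algebra generator `y_i`. -/
abbrev yF (K : Type) [Field K] (i : ℤ) : FreeAlgebra K (ℤ ⊕ ℤ) :=
  FreeAlgebra.ι K (Sum.inr i)

/-- The defining relations (1)–(9) of the algebra `A`, with parameter `q`. -/
inductive SphRel (K : Type) [Field K] (q : K) :
    FreeAlgebra K (ℤ ⊕ ℤ) → FreeAlgebra K (ℤ ⊕ ℤ) → Prop
  | x1 (i : ℤ) : SphRel K q
      (xF K i * xF K i * xF K (i-1) - (1 + q⁻¹) • (xF K i * xF K (i-1) * xF K i)
        + q⁻¹ • (xF K (i-1) * xF K i * xF K i)) 0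
  | x2 (i : ℤ) : SphRel K q
      (xF K i * xF K (i-1) * xF K (i-1) - (1 + q⁻¹) • (xF K (i-1) * xF K i * xF K (i-1))
        + q⁻¹ • (xF K (i-1) * xF K (i-1) * xF K i)) 0
  | x3 (i j : ℤ) (h : 1 < |i - j|) : SphRel K q (xF K i * xF K j) (xF K j * xF K i)
  | yx1 (i : ℤ) : SphRel K q
      (yF K i * xF K i - q • (xF K i * yF K i) + (q / (q - 1)) • (1 : FreeAlgebra K (ℤ ⊕ ℤ))) 0
  | yx2 (i : ℤ) : SphRel K q
      (yF K i * xF K (i+1) - q⁻¹ • (xF K (i+1) * yF K i)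
        - (1 / (q - 1)) • (1 : FreeAlgebra K (ℤ ⊕ ℤ))) 0
  | yx3 (i j : ℤ) (h1 : j ≠ i) (h2 : j ≠ i + 1) :
      SphRel K q (yF K i * xF K j) (xF K j * yF K i)
  | y1 (i : ℤ) : SphRel K q
      (yF K i * yF K i * yF K (i-1) - (1 + q⁻¹) • (yF K i * yF K (i-1) * yF K i)
        + q⁻¹ • (yF K (i-1) * yF K i * yF K i)) 0
  | y2 (i : ℤ) : SphRel K q
      (yF K i * yF K (i-1) * yF K (i-1) - (1 + q⁻¹) • (yF K (i-1) * yF K i * yF K (i-1))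
        + q⁻¹ • (yF K (i-1) * yF K (i-1) * yF K i)) 0
  | y3 (i j : ℤ) (h : 1 < |i - j|) : SphRel K q (yF K i * yF K j) (yF K j * yF K i)

/-- The algebra `A` presented by the generators `x_i, y_i` and the relations (1)–(9). -/
abbrev SphAlg (K : Type) [Field K] (q : K) : Type := RingQuot (SphRel K q)

/-- The generator `x_i` of `A`. -/
abbrev xA (K : Type) [Field K] (q : K) (i : ℤ) : SphAlg K q :=
  RingQuot.mkAlgHom K (SphRel K q) (xF K i)

/-- The generator `y_i` of `A`. -/
abbrev yA (K : Type) [Field K] (q : K) (i : ℤ) : SphAlg K q :=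
  RingQuot.mkAlgHom K (SphRel K q) (yF K i)

/-- `K = ℚ(√q)`, the subfield of `ℝ` generated over `ℚ` by `v = √q`. -/
abbrev Kf (q : ℕ) : Type := ↥(IntermediateField.adjoin ℚ {Real.sqrt q})

/-- `v = √q`, as an element of `K = ℚ(√q)`. -/
def vK (q : ℕ) : Kf q :=
  ⟨Real.sqrt q, IntermediateField.subset_adjoin ℚ {Real.sqrt q} rfl⟩

/-- The commutation relation on `A`, whose associated quotient `RingQuot` is the quotient of
`A` by the two-sided ideal `I` generated by all commutators. -/
abbrev CommRel (K : Type) [Field K] (q : K) : SphAlg K q → SphAlg K q → Prop :=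
  fun u w => ∃ a b : SphAlg K q, u = a * b ∧ w = b * a

open MvPolynomial in
/-- The ideal of the polynomial ring `K[X_i, Y_i : i ∈ ℤ]` generated by the elements
`X_i Y_i − q/(q−1)²` and `X_{i+1} Y_i − q/(q−1)²`. -/
abbrev TorusIdeal (K : Type) [Field K] (q : K) : Ideal (MvPolynomial (ℤ ⊕ ℤ) K) :=
  Ideal.span
    ((Set.range fun i : ℤ =>
        (X (Sum.inl i) * X (Sum.inr i) - C (q / (q - 1) ^ 2) : MvPolynomial (ℤ ⊕ ℤ) K)) ∪
     (Set.range fun i : ℤ =>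
        (X (Sum.inl (i + 1)) * X (Sum.inr i) - C (q / (q - 1) ^ 2) : MvPolynomial (ℤ ⊕ ℤ) K)))

section Torus

open MvPolynomial

variable {K : Type} [Field K] {q : K}

instance instCommRingAbelianization {R : Type} [Ring R] :
    CommRing (RingQuot fun u w : R => ∃ a b : R, u = a * b ∧ w = b * a) where
  __ := (inferInstance : Ring (RingQuot fun u w : R => ∃ a b : R, u = a * b ∧ w = b * a))
  mul_comm a b := by
    obtain ⟨a, rfl⟩ := RingQuot.mkRingHom_surjective _ a
    obtain ⟨b, rfl⟩ := RingQuot.mkRingHom_surjective _ b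
    simpa only [← map_mul] using RingQuot.mkRingHom_rel ⟨a, b, rfl, rfl⟩

section Relations

variable {B : Type} [CommRing B] [Algebra K B]

lemma serre₁_eq_zero (q : K) (a b : B) :
    a * a * b - (1 + q⁻¹) • (a * b * a) + q⁻¹ • (b * a * a) = 0 := by
  simp only [Algebra.smul_def, map_add, map_one]; ring

lemma serre₂_eq_zero (q : K) (a b : B) :
    a * b * b - (1 + q⁻¹) • (b * a * b) + q⁻¹ • (b * b * a) = 0 := by
  simp only [Algebra.smul_def, map_add, map_one]; ring

lemma yx_rel_eq_zero_iff (hq₁ : q ≠ 1) (a b : B) :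
    b * a - q • (a * b) + (q / (q - 1)) • (1 : B) = 0 ↔
      a * b = algebraMap K B (q / (q - 1) ^ 2) := by
  have hq : q - 1 ≠ 0 := sub_ne_zero.mpr hq₁
  have key : b * a - q • (a * b) + (q / (q - 1)) • (1 : B) =
      (1 - q) • (a * b - algebraMap K B (q / (q - 1) ^ 2)) := by
    rw [mul_comm b a, Algebra.algebraMap_eq_smul_one]
    match_scalars <;> field_simp
    ring
  rw [key, smul_eq_zero, or_iff_right (sub_ne_zero.mpr hq₁.symm), sub_eq_zero]

lemma yx_succ_rel_eq_zero_iff (hq₀ : q ≠ 0) (hq₁ : q ≠ 1) (a b : B) :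
    b * a - q⁻¹ • (a * b) - (1 / (q - 1)) • (1 : B) = 0 ↔
      a * b = algebraMap K B (q / (q - 1) ^ 2) := by
  have hq : q - 1 ≠ 0 := sub_ne_zero.mpr hq₁
  have key : b * a - q⁻¹ • (a * b) - (1 / (q - 1)) • (1 : B) =
      (1 - q⁻¹) • (a * b - algebraMap K B (q / (q - 1) ^ 2)) := by
    rw [mul_comm b a, Algebra.algebraMap_eq_smul_one]
    match_scalars <;> field_simp
  have hq' : (1 : K) - q⁻¹ ≠ 0 := by
    rwa [sub_ne_zero, ne_comm, inv_ne_one]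
  rw [key, smul_eq_zero, or_iff_right hq', sub_eq_zero]

end Relations

def IsTorusPoint (q : K) {B : Type} [CommRing B] [Algebra K B] (g : ℤ ⊕ ℤ → B) : Prop :=
  ∀ i : ℤ, g (.inl i) * g (.inr i) = algebraMap K B (q / (q - 1) ^ 2) ∧
    g (.inl (i + 1)) * g (.inr i) = algebraMap K B (q / (q - 1) ^ 2)

lemma isTorusPoint_mk_X :
    IsTorusPoint q fun s => Ideal.Quotient.mk (TorusIdeal K q) (X s) := by
  intro i
  simp only [← map_mul, ← Ideal.Quotient.mk_algebraMap, Ideal.Quotient.eq]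
  exact ⟨Ideal.subset_span (.inl ⟨i, rfl⟩), Ideal.subset_span (.inr ⟨i, rfl⟩)⟩

lemma torusIdeal_le_ker_aeval {B : Type} [CommRing B] [Algebra K B] {g : ℤ ⊕ ℤ → B}
    (hg : IsTorusPoint q g) : TorusIdeal K q ≤ RingHom.ker (aeval g) := by
  rw [Ideal.span_le]
  rintro p (⟨i, rfl⟩ | ⟨i, rfl⟩) <;>
    simp [(hg i).1, (hg i).2]

lemma sphRel_lift_of_isTorusPoint (hq₀ : q ≠ 0) (hq₁ : q ≠ 1) {B : Type} [CommRing B]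
    [Algebra K B] {g : ℤ ⊕ ℤ → B} (hg : IsTorusPoint q g) ⦃u w : FreeAlgebra K (ℤ ⊕ ℤ)⦄
    (h : SphRel K q u w) : FreeAlgebra.lift K g u = FreeAlgebra.lift K g w := by
  cases h <;>
    simp only [map_add, map_sub, map_mul, map_smul, map_zero, map_one, FreeAlgebra.lift_ι_apply]
  case x1 | y1 => exact serre₁_eq_zero q _ _
  case x2 | y2 => exact serre₂_eq_zero q _ _
  case x3 | yx3 | y3 => exact mul_comm _ _
  case yx1 i => exact (yx_rel_eq_zero_iff hq₁ _ _).mpr (hg i).1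
  case yx2 i => exact (yx_succ_rel_eq_zero_iff hq₀ hq₁ _ _).mpr (hg i).2

lemma isTorusPoint_abelianization (hq₀ : q ≠ 0) (hq₁ : q ≠ 1) :
    IsTorusPoint q fun s => RingQuot.mkAlgHom K (CommRel K q)
      (RingQuot.mkAlgHom K (SphRel K q) (FreeAlgebra.ι K s)) := by
  intro i
  constructor
  · rw [← yx_rel_eq_zero_iff hq₁]
    simpa using congrArg (RingQuot.mkAlgHom K (CommRel K q))
      (RingQuot.mkAlgHom_rel K (SphRel.yx1 (q := q) i))
  · rw [← yx_succ_rel_eq_zero_iff hq₀ hq₁]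
    simpa using congrArg (RingQuot.mkAlgHom K (CommRel K q))
      (RingQuot.mkAlgHom_rel K (SphRel.yx2 (q := q) i))

variable (q) in
def abelianizationToTorus (hq₀ : q ≠ 0) (hq₁ : q ≠ 1) :
    RingQuot (CommRel K q) →ₐ[K] MvPolynomial (ℤ ⊕ ℤ) K ⧸ TorusIdeal K q :=
  let f : SphAlg K q →ₐ[K] MvPolynomial (ℤ ⊕ ℤ) K ⧸ TorusIdeal K q :=
    RingQuot.liftAlgHom K ⟨FreeAlgebra.lift K fun s => Ideal.Quotient.mk (TorusIdeal K q) (X s),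
      sphRel_lift_of_isTorusPoint hq₀ hq₁ isTorusPoint_mk_X⟩
  RingQuot.liftAlgHom K ⟨f, by rintro _ _ ⟨a, b, rfl, rfl⟩; rw [map_mul, map_mul, mul_comm]⟩

variable (q) in
def torusToAbelianization (hq₀ : q ≠ 0) (hq₁ : q ≠ 1) :
    MvPolynomial (ℤ ⊕ ℤ) K ⧸ TorusIdeal K q →ₐ[K] RingQuot (CommRel K q) :=
  Ideal.Quotient.liftₐ _ (aeval fun s => RingQuot.mkAlgHom K (CommRel K q)
      (RingQuot.mkAlgHom K (SphRel K q) (FreeAlgebra.ι K s))) fun _ ha =>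
    RingHom.mem_ker.mp (torusIdeal_le_ker_aeval (isTorusPoint_abelianization hq₀ hq₁) ha)

lemma abelianizationToTorus_mk_mk_ι (hq₀ : q ≠ 0) (hq₁ : q ≠ 1) (s : ℤ ⊕ ℤ) :
    abelianizationToTorus q hq₀ hq₁ (RingQuot.mkAlgHom K (CommRel K q)
        (RingQuot.mkAlgHom K (SphRel K q) (FreeAlgebra.ι K s))) =
      Ideal.Quotient.mk (TorusIdeal K q) (X s) := by
  simp [abelianizationToTorus]

lemma torusToAbelianization_mk_X (hq₀ : q ≠ 0) (hq₁ : q ≠ 1) (s : ℤ ⊕ ℤ) :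
    torusToAbelianization q hq₀ hq₁ (Ideal.Quotient.mk (TorusIdeal K q) (X s)) =
      RingQuot.mkAlgHom K (CommRel K q)
        (RingQuot.mkAlgHom K (SphRel K q) (FreeAlgebra.ι K s)) :=
  (Ideal.Quotient.lift_mk _ _ _).trans (aeval_X _ s)

variable (q) in
def abelianizationEquivTorus (hq₀ : q ≠ 0) (hq₁ : q ≠ 1) :
    RingQuot (CommRel K q) ≃ₐ[K] MvPolynomial (ℤ ⊕ ℤ) K ⧸ TorusIdeal K q :=
  AlgEquiv.ofAlgHom (abelianizationToTorus q hq₀ hq₁) (torusToAbelianization q hq₀ hq₁)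
    (Ideal.Quotient.algHom_ext _ <| MvPolynomial.algHom_ext fun s => by
      simp [torusToAbelianization_mk_X, abelianizationToTorus_mk_mk_ι])
    (by ext s; simp [torusToAbelianization_mk_X, abelianizationToTorus_mk_mk_ι])

end Torus

set_option synthInstance.maxHeartbeats 1000000 in
theorem stmt_2 (q : ℕ) (hq : IsPrimePow q) :
    ∃ e : RingQuot (CommRel (Kf q) (q : Kf q)) ≃ₐ[Kf q]
        (MvPolynomial (ℤ ⊕ ℤ) (Kf q) ⧸ TorusIdeal (Kf q) (q : Kf q)),
      (∀ i : ℤ,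
        e (RingQuot.mkAlgHom (Kf q) (CommRel (Kf q) (q : Kf q)) (xA (Kf q) (q : Kf q) i)) =
          Ideal.Quotient.mk (TorusIdeal (Kf q) (q : Kf q)) (MvPolynomial.X (Sum.inl i))) ∧
      (∀ i : ℤ,
        e (RingQuot.mkAlgHom (Kf q) (CommRel (Kf q) (q : Kf q)) (yA (Kf q) (q : Kf q) i)) =
          Ideal.Quotient.mk (TorusIdeal (Kf q) (q : Kf q)) (MvPolynomial.X (Sum.inr i))) := by
  have hq₀ : (q : Kf q) ≠ 0 := Nat.cast_ne_zero.mpr hq.ne_zero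
  have hq₁ : (q : Kf q) ≠ 1 := Nat.cast_ne_one.mpr hq.ne_one
  exact ⟨abelianizationEquivTorus _ hq₀ hq₁,
    fun i => abelianizationToTorus_mk_mk_ι hq₀ hq₁ (.inl i),
    fun i => abelianizationToTorus_mk_mk_ι hq₀ hq₁ (.inr i)⟩

end
end

section
/- Let G₀ be an object lying in add(Σ•G) and X any object of T. Then for every graded morphism (g_p)_{p∈ℤ} from G₀ to X over G there exists a unique morphism f : G₀ → X in T such that g_p(u) = u ≫ f⟦p⟧ for all p ∈ ℤ and all u : G → G₀⟦p⟧. In other words, the functor F is fully faithful on add(Σ•G). -/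
/-!
Statement 6. If `G₀` lies in `add(Σ• G)` then every graded morphism `(g_p)` from `G₀`
to `X` over `G` is induced by a unique morphism `f : G₀ ⟶ X` of `T`.
-/

open CategoryTheory CategoryTheory.Limits CategoryTheory.Pretriangulated

variable {k : Type*} [CommRing k] {C : Type*} [Category C] [Preadditive C]
  [CategoryTheory.Linear k C] [HasZeroObject C] [HasShift C ℤ]
  [∀ n : ℤ, (shiftFunctor C n).Additive] [Pretriangulated C] [HasFiniteBiproducts C]

/-- An object `X` lies in `add(Σ• G)` if it is a direct summand of a finite direct sum
of shifts of `G`. -/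
def InAddShifts (G X : C) : Prop :=
  ∃ (n : ℕ) (ps : Fin n → ℤ) (r : X ⟶ ⨁ fun i : Fin n => G⟦ps i⟧)
    (s : (⨁ fun i : Fin n => G⟦ps i⟧) ⟶ X), r ≫ s = 𝟙 X

/-- `(g_p)_{p ∈ ℤ}` is a graded morphism from `X` to `Y` over `G`: a family of `k`-linear
maps `Hom(G, X⟦p⟧) → Hom(G, Y⟦p⟧)` compatible with the right action of the graded
endomorphism algebra of `G`. -/
def IsGradedHomOver (G X Y : C) (g : ∀ p : ℤ, (G ⟶ X⟦p⟧) →ₗ[k] (G ⟶ Y⟦p⟧)) : Prop :=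
  ∀ (p r : ℤ) (a : G ⟶ G⟦r⟧) (u : G ⟶ X⟦p⟧),
    g (p + r) (a ≫ u⟦r⟧' ≫ (shiftFunctorAdd C p r).inv.app X) =
      a ≫ (g p u)⟦r⟧' ≫ (shiftFunctorAdd C p r).inv.app Y


section Aux
variable {C : Type*} [Category C] [HasShift C ℤ]

lemma coh1' (q p : ℤ) (Z : C) :
    ((shiftFunctorCompIsoId C q (-q) (add_neg_cancel q)).inv.app Z)⟦q + p⟧' ≫
      (shiftFunctorAdd' C (-q) (q + p) p (by omega)).inv.app (Z⟦q⟧) =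
    (shiftFunctorAdd' C q p (q + p) rfl).hom.app Z := by
  have assoc := shiftFunctorAdd'_assoc_inv_app q (-q) (q + p) 0 p (q + p)
      (add_neg_cancel q) (by omega) (by omega) Z
  rw [← cancel_mono ((shiftFunctorAdd' C q p (q + p) rfl).inv.app Z), Category.assoc,
    Iso.hom_inv_id_app]
  have : (shiftFunctorAdd' C (-q) (q + p) p (by omega)).inv.app (Z⟦q⟧) ≫
      (shiftFunctorAdd' C q p (q + p) rfl).inv.app Z =
      ((shiftFunctorAdd' C q (-q) 0 (add_neg_cancel q)).inv.app Z)⟦q + p⟧' ≫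
      (shiftFunctorAdd' C 0 (q + p) (q + p) (zero_add _)).inv.app Z := assoc.symm
  rw [this, shiftFunctorAdd'_zero_add_inv_app]
  simp [shiftFunctorCompIsoId, ← Functor.map_comp]

lemma coh2' (q p : ℤ) (Z : C) :
    (shiftFunctorAdd' C q p (q + p) rfl).inv.app (Z⟦-q⟧) ≫
      (shiftFunctorAdd' C (-q) (q + p) p (by omega)).inv.app Z =
    ((shiftFunctorCompIsoId C (-q) q (neg_add_cancel q)).hom.app Z)⟦p⟧' := by
  have assoc := shiftFunctorAdd'_assoc_inv_app (-q) q p 0 (q + p) p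
      (neg_add_cancel q) rfl (by omega) Z
  rw [← assoc, shiftFunctorAdd'_zero_add_inv_app]
  simp [shiftFunctorCompIsoId, ← Functor.map_comp]
end Aux

set_option linter.unusedSectionVars false

theorem stmt_6 (G G₀ X : C) (hG₀ : InAddShifts G G₀)
    (g : ∀ p : ℤ, (G ⟶ G₀⟦p⟧) →ₗ[k] (G ⟶ X⟦p⟧))
    (hg : IsGradedHomOver G G₀ X g) :
    ∃! f : G₀ ⟶ X, ∀ (p : ℤ) (u : G ⟶ G₀⟦p⟧), g p u = u ≫ f⟦p⟧' := by
  obtain ⟨n, ps, r, s, hrs⟩ := hG₀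
  -- reformulated graded compatibility
  have hg' : ∀ (p rr q : ℤ) (h : p + rr = q) (a : G ⟶ G⟦rr⟧) (u : G ⟶ G₀⟦p⟧),
      g q (a ≫ u⟦rr⟧' ≫ (shiftFunctorAdd' C p rr q h).inv.app G₀) =
        a ≫ (g p u)⟦rr⟧' ≫ (shiftFunctorAdd' C p rr q h).inv.app X := by
    intro p rr q h a u
    subst h
    rw [shiftFunctorAdd'_eq_shiftFunctorAdd]
    exact hg p rr a u
  -- the "adjoint" of a map t : G⟦q⟧ ⟶ G₀
  let v : ∀ (q : ℤ), (G⟦q⟧ ⟶ G₀) → (G ⟶ G₀⟦-q⟧) := fun q t =>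
    (shiftFunctorCompIsoId C q (-q) (add_neg_cancel q)).inv.app G ≫ t⟦-q⟧'
  -- the morphism induced by g on a shift of G
  let φ : ∀ (q : ℤ), (G⟦q⟧ ⟶ G₀) → (G⟦q⟧ ⟶ X) := fun q t =>
    (g (-q) (v q t))⟦q⟧' ≫ (shiftFunctorCompIsoId C (-q) q (neg_add_cancel q)).hom.app X
  -- key computation
  have key : ∀ (q p : ℤ) (t : G⟦q⟧ ⟶ G₀) (b : G ⟶ (G⟦q⟧)⟦p⟧),
      g p (b ≫ t⟦p⟧') = b ≫ (φ q t)⟦p⟧' := by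
    intro q p t b
    have h : -q + (q + p) = p := by omega
    have H := hg' (-q) (q + p) p h
      (b ≫ (shiftFunctorAdd' C q p (q + p) rfl).inv.app G) (v q t)
    have hL : (b ≫ (shiftFunctorAdd' C q p (q + p) rfl).inv.app G) ≫ (v q t)⟦q + p⟧' ≫
        (shiftFunctorAdd' C (-q) (q + p) p h).inv.app G₀ = b ≫ t⟦p⟧' := by
      have nat := (shiftFunctorAdd' C (-q) (q + p) p h).inv.naturality t
      dsimp at nat
      simp only [v, Functor.map_comp, Category.assoc]
      rw [nat, ← Category.assoc ((_ : (G ⟶ _))), ← Category.assoc, ← Category.assoc]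
      congr 1
      rw [Category.assoc, Category.assoc, coh1' q p G, Iso.inv_hom_id_app]
      simp
    have hR : (b ≫ (shiftFunctorAdd' C q p (q + p) rfl).inv.app G) ≫
        (g (-q) (v q t))⟦q + p⟧' ≫ (shiftFunctorAdd' C (-q) (q + p) p h).inv.app X =
        b ≫ (φ q t)⟦p⟧' := by
      have nat := (shiftFunctorAdd' C q p (q + p) rfl).inv.naturality (g (-q) (v q t))
      dsimp at nat
      simp only [φ, Functor.map_comp, Category.assoc]
      rw [← reassoc_of% nat, coh2' q p X]
    rw [hL, hR] at H
    exact H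
  -- collapsing sums over the biproduct
  have collapse : ∀ (p : ℤ) (u : G ⟶ G₀⟦p⟧) {Y : C} (m : (⨁ fun i : Fin n => G⟦ps i⟧) ⟶ Y),
      ∑ i : Fin n, (u ≫ r⟦p⟧' ≫ (biproduct.π (fun i : Fin n => G⟦ps i⟧) i)⟦p⟧') ≫
        (biproduct.ι (fun i : Fin n => G⟦ps i⟧) i ≫ m)⟦p⟧' = u ≫ (r ≫ m)⟦p⟧' := by
    intro p u Y m
    have : ∑ i : Fin n, (u ≫ r⟦p⟧' ≫ (biproduct.π (fun i : Fin n => G⟦ps i⟧) i)⟦p⟧') ≫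
        (biproduct.ι (fun i : Fin n => G⟦ps i⟧) i ≫ m)⟦p⟧' =
        u ≫ r⟦p⟧' ≫ (∑ i : Fin n, (biproduct.π (fun i : Fin n => G⟦ps i⟧) i ≫
          biproduct.ι (fun i : Fin n => G⟦ps i⟧) i))⟦p⟧' ≫ m⟦p⟧' := by
      rw [Functor.map_sum, Preadditive.sum_comp, Preadditive.comp_sum, Preadditive.comp_sum]
      refine Finset.sum_congr rfl fun i _ => ?_
      simp [Functor.map_comp]
    rw [this, biproduct.total]
    simp [Functor.map_comp]
  let f : G₀ ⟶ X := r ≫ biproduct.desc fun i =>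
    φ (ps i) (biproduct.ι (fun i : Fin n => G⟦ps i⟧) i ≫ s)
  have hf : ∀ (p : ℤ) (u : G ⟶ G₀⟦p⟧), g p u = u ≫ f⟦p⟧' := by
    intro p u
    have hu : u = ∑ i : Fin n,
        (u ≫ r⟦p⟧' ≫ (biproduct.π (fun i : Fin n => G⟦ps i⟧) i)⟦p⟧') ≫
        (biproduct.ι (fun i : Fin n => G⟦ps i⟧) i ≫ s)⟦p⟧' := by
      rw [collapse p u s, hrs]
      simp
    conv_lhs => rw [hu]
    rw [map_sum]
    have : ∀ i : Fin n,
        g p ((u ≫ r⟦p⟧' ≫ (biproduct.π (fun i : Fin n => G⟦ps i⟧) i)⟦p⟧') ≫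
          (biproduct.ι (fun i : Fin n => G⟦ps i⟧) i ≫ s)⟦p⟧') =
        (u ≫ r⟦p⟧' ≫ (biproduct.π (fun i : Fin n => G⟦ps i⟧) i)⟦p⟧') ≫
          (biproduct.ι (fun i : Fin n => G⟦ps i⟧) i ≫
            biproduct.desc (fun i => φ (ps i) (biproduct.ι (fun i : Fin n => G⟦ps i⟧) i ≫ s)))⟦p⟧' := by
      intro i
      rw [key (ps i) p (biproduct.ι (fun i : Fin n => G⟦ps i⟧) i ≫ s)]
      congr 2
      simp
    rw [Finset.sum_congr rfl fun i _ => this i, collapse p u]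
  refine ⟨f, hf, ?_⟩
  intro f' hf'
  have comp_eq : ∀ i : Fin n,
      biproduct.ι (fun i : Fin n => G⟦ps i⟧) i ≫ s ≫ f' =
      biproduct.ι (fun i : Fin n => G⟦ps i⟧) i ≫ s ≫ f := by
    intro i
    set q := ps i
    set t := biproduct.ι (fun i : Fin n => G⟦ps i⟧) i ≫ s with ht
    have h1 : v q t ≫ f'⟦-q⟧' = v q t ≫ f⟦-q⟧' := by
      rw [← hf' (-q) (v q t), ← hf (-q) (v q t)]
    have h2 : (t ≫ f')⟦-q⟧' = (t ≫ f)⟦-q⟧' := by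
      simp only [v, Category.assoc] at h1
      simp only [Functor.map_comp]
      exact (cancel_epi ((shiftFunctorCompIsoId C q (-q) (add_neg_cancel q)).inv.app G)).mp h1
    have := (shiftFunctor C (-q)).map_injective h2
    rw [← Category.assoc, ← ht, this, ht, Category.assoc]
  have : s ≫ f' = s ≫ f := biproduct.hom_ext' _ _ fun i => comp_eq i
  calc f' = (r ≫ s) ≫ f' := by rw [hrs]; simp
    _ = r ≫ s ≫ f := by rw [Category.assoc, this]
    _ = f := by rw [← Category.assoc, hrs]; simp
end

section
/- Suppose G is a generator of T (every object X with Hom(G, X⟦p⟧) = 0 for all p ∈ ℤ is zero). Let X be an object of T and G₀ an object lying in add(Σ•G). If there exists a graded morphism (g_p)_{p∈ℤ} from G₀ to X over G with g_p bijective for every p ∈ ℤ, then X is isomorphic to G₀ in T. -/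
/-!
Statement 7. If `G` is a generator of `T`, `G₀` lies in `add(Σ• G)` and there is a graded
morphism `(g_p)` from `G₀` to `X` over `G` with every `g_p` bijective, then `X ≅ G₀`.
-/


open CategoryTheory CategoryTheory.Limits CategoryTheory.Pretriangulated

variable {k : Type*} [CommRing k] {C : Type*} [Category C] [Preadditive C]
  [CategoryTheory.Linear k C] [HasZeroObject C] [HasShift C ℤ]
  [∀ n : ℤ, (shiftFunctor C n).Additive] [Pretriangulated C] [HasFiniteBiproducts C]

/-!
Writing `G₀` as a retract of a finite sum of shifts `G⟦q⟧`, compatibility with the action of the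
maps `G ⟶ G⟦r⟧` forces every `g_p` to be composition with `φ⟦p⟧` for a single morphism
`φ : G₀ ⟶ X`: on a summand `G⟦q⟧` the whole family is determined by `g_{-q}`. Since the `g_p` are
bijective, the long exact `Hom(G, -⟦p⟧)`-sequence of a distinguished triangle on `φ` shows that no
nonzero map goes from `G` to a shift of the cone of `φ`. As `G` generates, the cone is zero and `φ`
is an isomorphism.
-/

omit [Preadditive C] [HasZeroObject C] [∀ n : ℤ, (shiftFunctor C n).Additive] [Pretriangulated C]
  [HasFiniteBiproducts C] in
lemma shift_map_comp_shiftFunctorCompIsoId_hom_app (q m : ℤ) {A B : C} (w : A ⟶ B⟦-q⟧) :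
    (w⟦q⟧' ≫ (shiftFunctorCompIsoId C (-q) q (neg_add_cancel q)).hom.app B)⟦m⟧' =
      (shiftFunctorAdd C q m).inv.app A ≫ w⟦q + m⟧' ≫
        (shiftFunctorAdd' C (-q) (q + m) m (neg_add_cancel_left q m)).inv.app B := by
  have hcounit : (shiftFunctorAdd C q m).inv.app (B⟦-q⟧) ≫
      (shiftFunctorAdd' C (-q) (q + m) m (neg_add_cancel_left q m)).inv.app B =
        ((shiftFunctorCompIsoId C (-q) q (neg_add_cancel q)).hom.app B)⟦m⟧' := by
    rw [← shiftFunctorAdd'_eq_shiftFunctorAdd,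
      ← shiftFunctorAdd'_assoc_inv_app (-q) q m 0 (q + m) m (neg_add_cancel q) rfl (by ring) B,
      shiftFunctorAdd'_zero_add_inv_app, ← Functor.map_comp]
    simp [shiftFunctorCompIsoId]
  have hnat := (shiftFunctorAdd C q m).inv.naturality w
  dsimp at hnat
  rw [Functor.map_comp, ← hcounit, reassoc_of% hnat]

omit [Preadditive C] [HasZeroObject C] [∀ n : ℤ, (shiftFunctor C n).Additive] [Pretriangulated C]
  [HasFiniteBiproducts C] in
lemma shift_map_shiftFunctorCompIsoId_inv_app_comp (q : ℤ) {A B : C} (s : A⟦q⟧ ⟶ B) :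
    ((shiftFunctorCompIsoId C q (-q) (add_neg_cancel q)).inv.app A ≫ s⟦-q⟧')⟦q⟧' ≫
      (shiftFunctorCompIsoId C (-q) q (neg_add_cancel q)).hom.app B = s := by
  rw [Functor.map_comp, Category.assoc]
  have hnat := (shiftFunctorCompIsoId C (-q) q (neg_add_cancel q)).hom.naturality s
  dsimp at hnat
  rw [hnat, shift_shiftFunctorCompIsoId_add_neg_cancel_inv_app]
  simp

namespace IsGradedHomOver

variable {G X Y : C} {g : ∀ p : ℤ, (G ⟶ X⟦p⟧) →ₗ[k] (G ⟶ Y⟦p⟧)}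

omit [HasZeroObject C] [∀ n : ℤ, (shiftFunctor C n).Additive] [Pretriangulated C]
  [HasFiniteBiproducts C] in
lemma map_comp_shiftFunctorAdd' (hg : IsGradedHomOver G X Y g) (p r n : ℤ) (h : p + r = n)
    (a : G ⟶ G⟦r⟧) (u : G ⟶ X⟦p⟧) :
    g n (a ≫ u⟦r⟧' ≫ (shiftFunctorAdd' C p r n h).inv.app X) =
      a ≫ (g p u)⟦r⟧' ≫ (shiftFunctorAdd' C p r n h).inv.app Y := by
  subst h
  simpa only [shiftFunctorAdd'_eq_shiftFunctorAdd] using hg p r a u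

omit [HasZeroObject C] [∀ n : ℤ, (shiftFunctor C n).Additive] [Pretriangulated C]
  [HasFiniteBiproducts C] in
lemma exists_shift_hom (hg : IsGradedHomOver G X Y g) (q : ℤ) (s : G⟦q⟧ ⟶ X) :
    ∃ t : G⟦q⟧ ⟶ Y, ∀ (m : ℤ) (b : G ⟶ G⟦q⟧⟦m⟧), g m (b ≫ s⟦m⟧') = b ≫ t⟦m⟧' := by
  -- transport `s` to `G ⟶ X⟦-q⟧`, apply `g (-q)`, and transport back
  refine ⟨(g (-q) ((shiftFunctorCompIsoId C q (-q) (add_neg_cancel q)).inv.app G ≫ s⟦-q⟧'))⟦q⟧' ≫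
    (shiftFunctorCompIsoId C (-q) q (neg_add_cancel q)).hom.app Y, fun m b => ?_⟩
  conv_lhs => rw [← shift_map_shiftFunctorCompIsoId_inv_app_comp q s]
  rw [shift_map_comp_shiftFunctorCompIsoId_hom_app, shift_map_comp_shiftFunctorCompIsoId_hom_app,
    ← Category.assoc, hg.map_comp_shiftFunctorAdd', Category.assoc]
  rfl

omit [HasZeroObject C] [Pretriangulated C] in
lemma exists_hom_of_inAddShifts (hg : IsGradedHomOver G X Y g) (hX : InAddShifts G X) :
    ∃ φ : X ⟶ Y, ∀ (m : ℤ) (u : G ⟶ X⟦m⟧), g m u = u ≫ φ⟦m⟧' := by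
  obtain ⟨n, ps, r, s, hrs⟩ := hX
  let F : Fin n → C := fun i => G⟦ps i⟧
  choose t ht using fun i => hg.exists_shift_hom (ps i) (biproduct.ι F i ≫ s)
  refine ⟨r ≫ biproduct.desc t, fun m u => ?_⟩
  have hu : u = ∑ i, (u ≫ (r ≫ biproduct.π F i)⟦m⟧') ≫ (biproduct.ι F i ≫ s)⟦m⟧' := by
    have hid : ∑ i, r ≫ biproduct.π F i ≫ biproduct.ι F i ≫ s = 𝟙 X := by
      calc ∑ i, r ≫ biproduct.π F i ≫ biproduct.ι F i ≫ s
          = r ≫ (∑ i, biproduct.π F i ≫ biproduct.ι F i) ≫ s := by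
            simp only [Preadditive.sum_comp, Preadditive.comp_sum, Category.assoc]
        _ = 𝟙 X := by rw [biproduct.total, Category.id_comp, hrs]
    conv_lhs => rw [← Category.comp_id u, ← (shiftFunctor C m).map_id, ← hid]
    simp [Functor.map_sum, Preadditive.comp_sum]
  calc g m u = ∑ i, g m ((u ≫ (r ≫ biproduct.π F i)⟦m⟧') ≫ (biproduct.ι F i ≫ s)⟦m⟧') := by
        conv_lhs => rw [hu]
        exact map_sum (g m) _ _
    _ = ∑ i, (u ≫ (r ≫ biproduct.π F i)⟦m⟧') ≫ (t i)⟦m⟧' := by simp only [ht]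
    _ = u ≫ (r ≫ biproduct.desc t)⟦m⟧' := by
        simp [F, biproduct.desc_eq, Preadditive.comp_sum, Functor.map_sum]

end IsGradedHomOver

omit [HasFiniteBiproducts C] in
lemma hom_obj₃_eq_zero_of_distTriang {A B Z : C} {f : A ⟶ B} {v : B ⟶ Z} {w : Z ⟶ A⟦(1 : ℤ)⟧}
    (hT : Triangle.mk f v w ∈ distTriang C) {P : C} (h₁ : ∀ a : P ⟶ B, ∃ b : P ⟶ A, b ≫ f = a)
    (h₂ : ∀ c : P ⟶ A⟦(1 : ℤ)⟧, c ≫ f⟦1⟧' = 0 → c = 0) (x : P ⟶ Z) : x = 0 := by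
  have hwf : w ≫ f⟦1⟧' = 0 := comp_distTriang_mor_zero₃₁ _ hT
  have hfv : f ≫ v = 0 := comp_distTriang_mor_zero₁₂ _ hT
  obtain ⟨a, rfl⟩ : ∃ a : P ⟶ B, x = a ≫ v :=
    Triangle.coyoneda_exact₃ _ hT x (h₂ (x ≫ w) (by rw [Category.assoc, hwf, Limits.comp_zero]))
  obtain ⟨b, rfl⟩ := h₁ a
  rw [Category.assoc, hfv, Limits.comp_zero]

omit [HasFiniteBiproducts C] in
lemma isIso_of_bijective_comp_shift_map {G A B : C}
    (hG : ∀ W : C, (∀ (p : ℤ) (u : G ⟶ W⟦p⟧), u = 0) → IsZero W) (φ : A ⟶ B)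
    (hφ : ∀ p : ℤ, Function.Bijective fun u : G ⟶ A⟦p⟧ => u ≫ φ⟦p⟧') : IsIso φ := by
  obtain ⟨Z, v, w, hT⟩ := distinguished_cocone_triangle φ
  refine (Triangle.isZero₃_iff_isIso₁ _ hT).1 (hG Z fun p => ?_)
  have hTp : Triangle.mk (p.negOnePow • φ⟦p⟧') (p.negOnePow • v⟦p⟧')
      (p.negOnePow • w⟦p⟧' ≫ (shiftFunctorComm C 1 p).hom.app A) ∈ distTriang C :=
    Triangle.shift_distinguished _ hT p
  refine hom_obj₃_eq_zero_of_distTriang hTp (fun a => ?_) (fun c hc => ?_)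
  · obtain ⟨b, rfl⟩ := (hφ p).2 a
    refine ⟨p.negOnePow • b, ?_⟩
    rw [Linear.units_smul_comp, Linear.comp_units_smul, smul_smul, Int.units_mul_self, one_smul]
  · rw [Functor.map_units_smul, Linear.comp_units_smul, smul_eq_zero_iff_eq] at hc
    have hshift := (shiftFunctorAdd C p 1).inv.naturality φ
    dsimp at hshift
    have hc' : c ≫ (shiftFunctorAdd C p 1).inv.app A = 0 :=
      (hφ (p + 1)).1 (by simp only [Category.assoc, ← hshift, reassoc_of% hc, zero_comp])
    simpa using hc' =≫ (shiftFunctorAdd C p 1).hom.app A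

theorem stmt_7 (G : C)
    (hG : ∀ W : C, (∀ (p : ℤ) (u : G ⟶ W⟦p⟧), u = 0) → IsZero W)
    (X G₀ : C) (hG₀ : InAddShifts G G₀)
    (g : ∀ p : ℤ, (G ⟶ G₀⟦p⟧) →ₗ[k] (G ⟶ X⟦p⟧))
    (hg : IsGradedHomOver G G₀ X g)
    (hbij : ∀ p : ℤ, Function.Bijective (g p)) :
    Nonempty (X ≅ G₀) := by
  obtain ⟨φ, hφ⟩ := hg.exists_hom_of_inAddShifts hG₀
  have : IsIso φ := isIso_of_bijective_comp_shift_map hG φ fun p => by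
    simpa only [← hφ] using hbij p
  exact ⟨(asIso φ).symm⟩
end

section
/- Assume the resolution hypothesis: every object W of T fits into a distinguished triangle G₁ → G₀ →w W → G₁⟦1⟧ in which G₀ and G₁ lie in add(Σ•G) and the map Hom(G, G₀⟦p⟧) → Hom(G, W⟦p⟧), u ↦ u ≫ w⟦p⟧, is surjective for every p ∈ ℤ. Let f : X → Y and g : Y → Z be morphisms of T such that u ≫ f⟦p⟧ = 0 for all p ∈ ℤ and all u : G → X⟦p⟧, and u' ≫ g⟦p⟧ = 0 for all p ∈ ℤ and all u' : G → Y⟦p⟧. Then f ≫ g = 0. (The ideal of morphisms killed by the functor F = ⊕_p Hom(G, Σ^p −) has square zero.) -/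
/-
Resolve `X` by the triangle `G₁ ⟶ G₀ ⟶ X ⟶ G₁⟦1⟧`. Since `G₀ ∈ add(Σ• G)` and `F(f) = 0`,
the map `G₀ ⟶ X` is killed by `f`, so `f` factors through `X ⟶ G₁⟦1⟧`; as `G₁⟦1⟧` is again a
summand of a sum of shifts of `G` and `F(g) = 0`, that factorisation is killed by `g`.
-/

open CategoryTheory CategoryTheory.Limits CategoryTheory.Pretriangulated

variable {k : Type*} [CommRing k] {C : Type*} [Category C] [Preadditive C]
  [CategoryTheory.Linear k C] [HasZeroObject C] [HasShift C ℤ]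
  [∀ n : ℤ, (shiftFunctor C n).Additive] [Pretriangulated C] [HasFiniteBiproducts C]

namespace CategoryTheory

variable {D : Type*} [Category D] [Preadditive D]

lemma Retract.comp_eq_zero {W W' V V' : D} (h : Retract W W') (φ : V ⟶ V')
    (hW' : ∀ ψ : W' ⟶ V, ψ ≫ φ = 0) (ψ : W ⟶ V) : ψ ≫ φ = 0 := by
  have h' : h.r ≫ ψ ≫ φ = 0 := by rw [← Category.assoc, hW']
  rw [← Category.id_comp ψ, ← h.retract, Category.assoc, Category.assoc, h', comp_zero]

lemma Limits.biproduct.comp_eq_zero [HasFiniteBiproducts D] {ι : Type*} [Finite ι]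
    {B : ι → D} {V V' : D} (φ : V ⟶ V') (hB : ∀ i (ψ : B i ⟶ V), ψ ≫ φ = 0)
    (ψ : ⨁ B ⟶ V) : ψ ≫ φ = 0 :=
  biproduct.hom_ext' _ _ fun i => by simpa using hB i (biproduct.ι B i ≫ ψ)

lemma comp_eq_zero_of_shift [HasShift D ℤ] {G V V' : D} (φ : V ⟶ V')
    (hφ : ∀ (p : ℤ) (u : G ⟶ V⟦p⟧), u ≫ φ⟦p⟧' = 0) (p : ℤ) (v : G⟦p⟧ ⟶ V) : v ≫ φ = 0 := by
  let e : (G⟦p⟧)⟦-p⟧ ≅ G := (shiftFunctorCompIsoId D p (-p) (add_neg_cancel p)).app G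
  have h : (v ≫ φ)⟦-p⟧' = 0 := by
    rw [← cancel_epi e.inv, Functor.map_comp, ← Category.assoc, hφ, comp_zero]
  exact (shiftFunctor D (-p)).map_injective (by simpa using h)

end CategoryTheory

namespace InAddShifts

variable {D : Type*} [Category D] [Preadditive D] [HasShift D ℤ]
  [∀ n : ℤ, (shiftFunctor D n).Additive] [HasFiniteBiproducts D]

lemma comp_eq_zero_of_shift {G W V V' : D} (hW : InAddShifts G W) (φ : V ⟶ V')
    (hφ : ∀ (p : ℤ) (u : G ⟶ V⟦p⟧), u ≫ φ⟦p⟧' = 0) (q : ℤ) (ψ : W⟦q⟧ ⟶ V) : ψ ≫ φ = 0 := by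
  obtain ⟨n, ps, r, s, hrs⟩ := hW
  refine (Retract.map ⟨r, s, hrs⟩ (shiftFunctor D q)).comp_eq_zero φ ?_ ψ
  refine (Retract.ofIso ((shiftFunctor D q).mapBiproduct _)).comp_eq_zero φ ?_
  refine biproduct.comp_eq_zero φ fun i => ?_
  refine (Retract.ofIso ((shiftFunctorAdd D (ps i) q).app G).symm).comp_eq_zero φ ?_
  exact CategoryTheory.comp_eq_zero_of_shift φ hφ _

lemma comp_eq_zero {G W V V' : D} (hW : InAddShifts G W) (φ : V ⟶ V')
    (hφ : ∀ (p : ℤ) (u : G ⟶ V⟦p⟧), u ≫ φ⟦p⟧' = 0) (ψ : W ⟶ V) : ψ ≫ φ = 0 :=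
  (Retract.ofIso ((shiftFunctorZero D ℤ).app W).symm).comp_eq_zero φ
    (hW.comp_eq_zero_of_shift φ hφ 0) ψ

end InAddShifts

theorem stmt_9 (G : C)
    (hres : ∀ W : C, ∃ (G₁ G₀ : C) (a : G₁ ⟶ G₀) (w : G₀ ⟶ W) (δ : W ⟶ G₁⟦(1 : ℤ)⟧),
      InAddShifts G G₁ ∧ InAddShifts G G₀ ∧
      (Triangle.mk a w δ ∈ distTriang C) ∧
      ∀ p : ℤ, Function.Surjective (fun u : G ⟶ G₀⟦p⟧ => u ≫ w⟦p⟧'))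
    {X Y Z : C} (f : X ⟶ Y) (g : Y ⟶ Z)
    (hf : ∀ (p : ℤ) (u : G ⟶ X⟦p⟧), u ≫ f⟦p⟧' = 0)
    (hg : ∀ (p : ℤ) (u' : G ⟶ Y⟦p⟧), u' ≫ g⟦p⟧' = 0) :
    f ≫ g = 0 := by
  obtain ⟨G₁, G₀, a, w, δ, hG₁, hG₀, hT, -⟩ := hres X
  obtain ⟨h, hh : f = δ ≫ h⟩ := Triangle.yoneda_exact₃ _ hT f (hG₀.comp_eq_zero f hf w)
  rw [hh]
  exact (Category.assoc δ h g).trans (by rw [hG₁.comp_eq_zero_of_shift g hg 1 h, comp_zero])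
end

section
/- Every graded submodule N of a finitely generated graded free d-graded k[t]-module (i.e. of a finite direct sum of modules F(p)) is itself isomorphic, as a d-graded module, to a finite direct sum of modules F(p'). In particular the category of finitely presented graded modules over k[t] with t homogeneous of nonzero degree d is hereditary: every graded submodule of a projective object is projective. -/
/-!
Induction on the rank, splitting off the first summand. Let `N` be a graded submodule of
`F(p) × M` and `K = N ∩ (0 × M)`. Since `deg t ≠ 0`, the homogeneous elements of `F(p)` are the
monomials `c tʲ`. If some homogeneous element of `N` has a nonzero first coordinate, pick one,
`y`, with first coordinate `tᵃ` and `a` minimal; then `tᵃ` divides the first coordinate of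
every element of `N`, so `N = K ⊕ k[t]·y ≅ K ⊕ F(p + ad)` as graded modules. Otherwise `N = K`.
In both cases `K` inherits the grading, because subtracting `g • y` from a homogeneous element
of `N` keeps it homogeneous.
-/

open Polynomial
open scoped DirectSum

noncomputable section

variable (k : Type) [Field k]

/-- The grading of the free module `F(p)`: the `m`-th piece is `k·tʲ` if `m = p + jd`
for some `j ≥ 0`, and `0` otherwise. -/
def freeGrading (d p m : ℤ) : Submodule k (Polynomial k) :=
  ⨆ (j : ℕ) (_ : m = p + (j : ℤ) * d), Submodule.span k {(X : Polynomial k) ^ j}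

/-- The grading of the finite direct sum `⨁ i, F(ps i)`. -/
def freeSumGrading (d : ℤ) (N : ℕ) (ps : Fin N → ℤ) (m : ℤ) :
    Submodule k (⨁ _i : Fin N, Polynomial k) :=
  ⨅ i : Fin N,
    (freeGrading k d (ps i) m).comap (DirectSum.component k (Fin N) (fun _ => Polynomial k) i)

variable {k}

theorem mem_freeGrading_iff {d p m : ℤ} {f : k[X]} :
    f ∈ freeGrading k d p m ↔ ∀ j, f.coeff j ≠ 0 → m = p + j * d := by
  constructor
  · intro hf
    have hle : freeGrading k d p m ≤
        ⨅ (j : ℕ) (_ : m ≠ p + j * d), LinearMap.ker (lcoeff k j) :=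
      iSup₂_le fun j hj => (Submodule.span_singleton_le_iff_mem _ _).2 <| by
        simp only [Submodule.mem_iInf, LinearMap.mem_ker, lcoeff_apply]
        rintro i hi
        rw [coeff_X_pow, if_neg]
        rintro rfl
        exact hi hj
    intro j hj
    by_contra hm
    have hf' := hle hf
    simp only [Submodule.mem_iInf, LinearMap.mem_ker, lcoeff_apply] at hf'
    exact hj (hf' j hm)
  · intro hf
    rw [f.as_sum_support_C_mul_X_pow]
    refine Submodule.sum_mem _ fun j hj => ?_
    refine Submodule.mem_iSup_of_mem j (Submodule.mem_iSup_of_mem (hf j (mem_support_iff.1 hj)) ?_)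
    rw [← smul_eq_C_mul]
    exact Submodule.smul_mem _ _ (Submodule.mem_span_singleton_self _)

theorem exists_eq_C_mul_X_pow_of_mem_freeGrading {d p m : ℤ} (hd : d ≠ 0) {f : k[X]}
    (hf : f ∈ freeGrading k d p m) : ∃ j, f = C (f.coeff j) * X ^ j := by
  have hsupp : f.support.card ≤ 1 := Finset.card_le_one.2 fun i hi j hj => by
    have h := (mem_freeGrading_iff.1 hf i (mem_support_iff.1 hi)).symm.trans
      (mem_freeGrading_iff.1 hf j (mem_support_iff.1 hj))
    exact_mod_cast mul_right_cancel₀ hd (add_left_cancel h)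
  obtain ⟨j, c, rfl⟩ := card_support_le_one_iff_monomial.1 hsupp
  exact ⟨j, by rw [coeff_monomial_same, C_mul_X_pow_eq_monomial]⟩

theorem mul_X_pow_mem_freeGrading_iff {d p m : ℤ} {g : k[X]} {a : ℕ} :
    g * X ^ a ∈ freeGrading k d p m ↔ g ∈ freeGrading k d (p + a * d) m := by
  simp only [mem_freeGrading_iff]
  constructor
  · intro h j hj
    rw [h (j + a) (by rwa [coeff_mul_X_pow])]
    push_cast; ring
  · intro h j hj
    rw [coeff_mul_X_pow'] at hj
    split_ifs at hj with ha
    · rw [h _ hj]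
      push_cast [ha]; ring
    · exact absurd rfl hj

theorem X_mul_mem_freeGrading {d p m : ℤ} {f : k[X]} (hf : f ∈ freeGrading k d p m) :
    X * f ∈ freeGrading k d p (m + d) := by
  rw [mul_comm, ← pow_one X, mul_X_pow_mem_freeGrading_iff, mem_freeGrading_iff]
  intro j hj
  rw [mem_freeGrading_iff.1 hf j hj]
  push_cast; ring

section GradedModule

variable {M : Type*} [AddCommGroup M] [Module k[X] M] [Module k M] {d : ℤ} {𝓜 : ℤ → Submodule k M}

theorem X_pow_smul_mem (hX : ∀ m, ∀ v ∈ 𝓜 m, (X : k[X]) • v ∈ 𝓜 (m + d)) {m : ℤ} {v : M}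
    (hv : v ∈ 𝓜 m) (j : ℕ) : (X : k[X]) ^ j • v ∈ 𝓜 (m + j * d) := by
  induction j with
  | zero => simpa using hv
  | succ j ih =>
    rw [pow_succ', mul_smul]
    convert hX _ _ ih using 2
    push_cast; ring

variable [IsScalarTower k k[X] M]

theorem smul_mem_of_mem_freeGrading (hX : ∀ m, ∀ v ∈ 𝓜 m, (X : k[X]) • v ∈ 𝓜 (m + d))
    {q m : ℤ} {g : k[X]} (hg : g ∈ freeGrading k d q m) {v : M} (hv : v ∈ 𝓜 q) :
    g • v ∈ 𝓜 m := by
  rw [g.as_sum_support_C_mul_X_pow, Finset.sum_smul]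
  refine Submodule.sum_mem _ fun j hj => ?_
  rw [mul_smul, ← algebraMap_eq, algebraMap_smul,
    mem_freeGrading_iff.1 hg j (mem_support_iff.1 hj)]
  exact Submodule.smul_mem _ _ (X_pow_smul_mem hX hv j)

def IsGradedSubmodule (𝓜 : ℤ → Submodule k M) (N : Submodule k[X] M) : Prop :=
  N.restrictScalars k ≤ ⨆ m, N.restrictScalars k ⊓ 𝓜 m

def inducedGrading (𝓜 : ℤ → Submodule k M) (N : Submodule k[X] M) (m : ℤ) : Submodule k N :=
  (𝓜 m).comap (N.subtype.restrictScalars k)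

@[simp]
theorem mem_inducedGrading {𝓜 : ℤ → Submodule k M} {N : Submodule k[X] M} {m : ℤ} {x : N} :
    x ∈ inducedGrading 𝓜 N m ↔ (x : M) ∈ 𝓜 m :=
  Iff.rfl

end GradedModule

variable (k) in
def freePiGrading (d : ℤ) {n : ℕ} (ps : Fin n → ℤ) (m : ℤ) : Submodule k (Fin n → k[X]) :=
  Submodule.pi Set.univ fun i => freeGrading k d (ps i) m

@[simp]
theorem mem_freePiGrading {d : ℤ} {n : ℕ} {ps : Fin n → ℤ} {m : ℤ} {x : Fin n → k[X]} :
    x ∈ freePiGrading k d ps m ↔ ∀ i, x i ∈ freeGrading k d (ps i) m := by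
  simp [freePiGrading, Submodule.mem_pi]

theorem X_smul_mem_freePiGrading {d : ℤ} {n : ℕ} {ps : Fin n → ℤ} (m : ℤ) (x : Fin n → k[X])
    (hx : x ∈ freePiGrading k d ps m) : (X : k[X]) • x ∈ freePiGrading k d ps (m + d) :=
  mem_freePiGrading.2 fun i => X_mul_mem_freeGrading (mem_freePiGrading.1 hx i)

theorem consLinearEquiv_mem_freePiGrading_iff {d : ℤ} {n : ℕ} {ps : Fin (n + 1) → ℤ} {m : ℤ}
    {w : k[X] × (Fin n → k[X])} :
    Fin.consLinearEquiv k[X] (fun _ => k[X]) w ∈ freePiGrading k d ps m ↔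
      w ∈ (freeGrading k d (ps 0) m).prod (freePiGrading k d (Fin.tail ps) m) := by
  simp [Fin.forall_fin_succ, Submodule.mem_prod, Fin.tail]

section GradedFree

variable {M M' : Type*} [AddCommGroup M] [Module k[X] M] [Module k M]
  [AddCommGroup M'] [Module k[X] M'] [Module k M'] {d : ℤ}
  {𝓜 : ℤ → Submodule k M} {𝓜' : ℤ → Submodule k M'}

variable (d) in
def IsGradedFree (𝓜 : ℤ → Submodule k M) : Prop :=
  ∃ (n : ℕ) (ps : Fin n → ℤ) (e : M ≃ₗ[k[X]] (Fin n → k[X])),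
    ∀ m x, x ∈ 𝓜 m ↔ e x ∈ freePiGrading k d ps m

theorem IsGradedFree.of_linearEquiv (e : M ≃ₗ[k[X]] M') (he : ∀ m x, x ∈ 𝓜 m ↔ e x ∈ 𝓜' m)
    (h : IsGradedFree d 𝓜') : IsGradedFree d 𝓜 := by
  obtain ⟨n, ps, e', he'⟩ := h
  exact ⟨n, ps, e.trans e', fun m x => (he m x).trans (he' m (e x))⟩

theorem isGradedFree_of_subsingleton [Subsingleton M] : IsGradedFree d 𝓜 :=
  ⟨0, Fin.elim0, LinearEquiv.ofSubsingleton _ _, fun m x => by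
    simp [Subsingleton.elim x 0]⟩

theorem IsGradedFree.prod (q : ℤ) (h : IsGradedFree d 𝓜) :
    IsGradedFree d fun m => (freeGrading k d q m).prod (𝓜 m) := by
  obtain ⟨n, ps, e, he⟩ := h
  refine ⟨n + 1, Fin.cons q ps, ((LinearEquiv.refl _ _).prodCongr e).trans
    (Fin.consLinearEquiv k[X] fun _ : Fin (n + 1) => k[X]), fun m x => ?_⟩
  rw [LinearEquiv.trans_apply, consLinearEquiv_mem_freePiGrading_iff]
  simp [Submodule.mem_prod, he]

variable [IsScalarTower k k[X] M] [IsScalarTower k k[X] M']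

theorem IsGradedSubmodule.map {N : Submodule k[X] M} (e : M ≃ₗ[k[X]] M')
    (he : ∀ m x, x ∈ 𝓜 m ↔ e x ∈ 𝓜' m) (hN : IsGradedSubmodule 𝓜 N) :
    IsGradedSubmodule 𝓜' (N.map (e : M →ₗ[k[X]] M')) := by
  rintro _ ⟨x, hx, rfl⟩
  have hex := Submodule.mem_map_of_mem (f := (e : M →ₗ[k[X]] M').restrictScalars k) (hN hx)
  rw [Submodule.map_iSup] at hex
  have hmono : ∀ m, (N.restrictScalars k ⊓ 𝓜 m).map ((e : M →ₗ[k[X]] M').restrictScalars k) ≤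
      (N.map (e : M →ₗ[k[X]] M')).restrictScalars k ⊓ 𝓜' m := by
    rintro m _ ⟨y, ⟨hyN, hy⟩, rfl⟩
    exact ⟨⟨y, hyN, rfl⟩, (he m y).1 hy⟩
  exact iSup_mono hmono hex

theorem IsGradedFree.of_map {N : Submodule k[X] M} (e : M ≃ₗ[k[X]] M')
    (he : ∀ m x, x ∈ 𝓜 m ↔ e x ∈ 𝓜' m)
    (h : IsGradedFree d (inducedGrading 𝓜' (N.map (e : M →ₗ[k[X]] M')))) :
    IsGradedFree d (inducedGrading 𝓜 N) :=
  h.of_linearEquiv (e.submoduleMap N) fun m x => by simpa using he m x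

end GradedFree

section Splitting

variable {M : Type*} [AddCommGroup M] [Module k[X] M] [Module k M] [IsScalarTower k k[X] M]
  {d p : ℤ} {𝓜 : ℤ → Submodule k M} {N : Submodule k[X] (k[X] × M)}

theorem exists_mem_fst_eq_X_pow_forall_dvd (hd : d ≠ 0)
    (h : ∃ m, ∃ x ∈ N, x ∈ (freeGrading k d p m).prod (𝓜 m) ∧ x.1 ≠ 0) :
    ∃ (a : ℕ) (y : k[X] × M), y ∈ N ∧ y ∈ (freeGrading k d p (p + a * d)).prod (𝓜 (p + a * d)) ∧
      y.1 = X ^ a ∧ ∀ m, ∀ x ∈ N, x ∈ (freeGrading k d p m).prod (𝓜 m) → X ^ a ∣ x.1 := by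
  classical
  have key : ∀ m, ∀ x ∈ N, x ∈ (freeGrading k d p m).prod (𝓜 m) → x.1 ≠ 0 →
      ∃ j : ℕ, (∃ y ∈ N, y ∈ (freeGrading k d p (p + j * d)).prod (𝓜 (p + j * d)) ∧ y.1 = X ^ j) ∧
        X ^ j ∣ x.1 := by
    intro m x hxN hxG hx1
    obtain ⟨j, hj⟩ := exists_eq_C_mul_X_pow_of_mem_freeGrading hd hxG.1
    set c := x.1.coeff j
    have hc : c ≠ 0 := fun hc => hx1 (by rw [hj, hc, C_0, zero_mul])
    have hm : m = p + j * d := mem_freeGrading_iff.1 hxG.1 j hc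
    refine ⟨j, ⟨c⁻¹ • x, N.smul_of_tower_mem _ hxN, hm ▸ Submodule.smul_mem _ _ hxG, ?_⟩,
      hj ▸ dvd_mul_left _ _⟩
    rw [Prod.smul_fst, hj, smul_eq_C_mul, ← mul_assoc, ← C_mul, inv_mul_cancel₀ hc, C_1, one_mul]
  obtain ⟨m, x, hxN, hxG, hx1⟩ := h
  have hex := (key m x hxN hxG hx1).imp fun _ => And.left
  obtain ⟨y, hyN, hyG, hy1⟩ := Nat.find_spec hex
  refine ⟨Nat.find hex, y, hyN, hyG, hy1, fun m x hxN hxG => ?_⟩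
  by_cases hx1 : x.1 = 0
  · simp [hx1]
  obtain ⟨j, hj, hdvd⟩ := key m x hxN hxG hx1
  exact (pow_dvd_pow X (Nat.find_min' hex hj)).trans hdvd

theorem IsGradedSubmodule.exists_eq_smul_add
    (hX : ∀ m, ∀ v ∈ 𝓜 m, (X : k[X]) • v ∈ 𝓜 (m + d))
    (hN : IsGradedSubmodule (fun m => (freeGrading k d p m).prod (𝓜 m)) N)
    {y : k[X] × M} (hyN : y ∈ N) {q : ℤ} (hyG : y.2 ∈ 𝓜 q)
    (hhom : ∀ m, ∀ x ∈ N, x ∈ (freeGrading k d p m).prod (𝓜 m) →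
      ∃ g ∈ freeGrading k d q m, x.1 = g * y.1)
    {x : k[X] × M} (hx : x ∈ N) :
    ∃ (g : k[X]), ∃ z ∈ ⨆ m, (N.comap (LinearMap.inr k[X] k[X] M)).restrictScalars k ⊓ 𝓜 m,
      x = g • y + (0, z) := by
  refine Submodule.iSup_induction _ (motive := fun x => ∃ (g : k[X]),
    ∃ z ∈ ⨆ m, (N.comap (LinearMap.inr k[X] k[X] M)).restrictScalars k ⊓ 𝓜 m, x = g • y + (0, z))
    (hN hx) ?_ ⟨0, 0, zero_mem _, by simp [Prod.zero_eq_mk]⟩ ?_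
  · rintro m x ⟨hxN, hxG⟩
    obtain ⟨g, hg, hx1⟩ := hhom m x hxN hxG
    have hx_eq : x = g • y + (0, x.2 - g • y.2) := Prod.ext (by simp [hx1]) (by simp)
    refine ⟨g, x.2 - g • y.2, Submodule.mem_iSup_of_mem m ⟨?_, ?_⟩, hx_eq⟩
    · have h0 : ((0 : k[X]), x.2 - g • y.2) = x - g • y := by
        conv_rhs => rw [hx_eq]
        abel
      simpa [h0] using N.sub_mem hxN (N.smul_mem g hyN)
    · exact (𝓜 m).sub_mem hxG.2 (smul_mem_of_mem_freeGrading hX hg hyG)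
  · rintro _ _ ⟨g, z, hz, rfl⟩ ⟨g', z', hz', rfl⟩
    refine ⟨g + g', z + z', add_mem hz hz', ?_⟩
    ext
    · simp [add_smul]
    · simp [add_smul]
      abel

theorem isGradedSubmodule_comap_inr {y : k[X] × M} (hy : y = 0 ∨ y.1 ≠ 0)
    (hdecomp : ∀ x ∈ N, ∃ (g : k[X]),
      ∃ z ∈ ⨆ m, (N.comap (LinearMap.inr k[X] k[X] M)).restrictScalars k ⊓ 𝓜 m,
        x = g • y + (0, z)) :
    IsGradedSubmodule 𝓜 (N.comap (LinearMap.inr k[X] k[X] M)) := by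
  intro z hz
  obtain ⟨g, z', hz', h⟩ := hdecomp (0, z) hz
  have hgy : g • y = 0 := by
    rcases hy with rfl | hy1
    · exact smul_zero g
    · have h1 : g * y.1 = 0 := by simpa using congrArg Prod.fst h
      simp [(mul_eq_zero.1 h1).resolve_right hy1]
  rw [hgy, zero_add, Prod.mk.injEq] at h
  exact h.2 ▸ hz'

theorem IsGradedFree.of_comap_inr (hfst : ∀ x ∈ N, x.1 = 0)
    (hK : IsGradedFree d (inducedGrading 𝓜 (N.comap (LinearMap.inr k[X] k[X] M)))) :
    IsGradedFree d (inducedGrading (fun m => (freeGrading k d p m).prod (𝓜 m)) N) := by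
  let ι := (LinearMap.inr k[X] k[X] M).restrict (p := N.comap (LinearMap.inr k[X] k[X] M))
    (q := N) fun _ hz => hz
  have hι : Function.Bijective ι := by
    refine ⟨fun z z' h => Subtype.ext (congrArg (fun x : N => (x : k[X] × M).2) h), ?_⟩
    rintro ⟨x, hx⟩
    have hx_eq : x = (0, x.2) := Prod.ext (hfst x hx) rfl
    exact ⟨⟨x.2, by rw [Submodule.mem_comap, LinearMap.inr_apply, ← hx_eq]; exact hx⟩,
      Subtype.ext hx_eq.symm⟩
  let e := LinearEquiv.ofBijective ι hι
  refine hK.of_linearEquiv e.symm fun m x => ?_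
  obtain ⟨z, rfl⟩ := e.surjective x
  simp [e, ι, Submodule.mem_prod]

theorem IsGradedFree.prod_of_comap_inr (hX : ∀ m, ∀ v ∈ 𝓜 m, (X : k[X]) • v ∈ 𝓜 (m + d))
    {y : k[X] × M} (hyN : y ∈ N) {a : ℕ} (hy1 : y.1 = X ^ a) (hyG : y.2 ∈ 𝓜 (p + a * d))
    (hdecomp : ∀ x ∈ N, ∃ (g : k[X]), ∃ z ∈ N.comap (LinearMap.inr k[X] k[X] M),
      x = g • y + (0, z))
    (hK : IsGradedFree d (inducedGrading 𝓜 (N.comap (LinearMap.inr k[X] k[X] M)))) :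
    IsGradedFree d (inducedGrading (fun m => (freeGrading k d p m).prod (𝓜 m)) N) := by
  set K := N.comap (LinearMap.inr k[X] k[X] M)
  let θ : k[X] × K →ₗ[k[X]] N :=
    ((LinearMap.toSpanSingleton k[X] _ y).coprod ((LinearMap.inr k[X] k[X] M).comp K.subtype)
      ).codRestrict N fun w => N.add_mem (N.smul_mem w.1 hyN) w.2.2
  have hθ : ∀ w : k[X] × K, (θ w : k[X] × M) = w.1 • y + ((0 : k[X]), (w.2 : M)) := fun _ => rfl
  have hθ_inj : Function.Injective θ := by
    refine (injective_iff_map_eq_zero θ).2 fun ⟨g, z⟩ h => ?_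
    have h' := congrArg Subtype.val h
    rw [hθ] at h'
    have hg : g = 0 := by
      have h1 : g * X ^ a = 0 := by simpa [hy1] using congrArg Prod.fst h'
      exact (mul_eq_zero.1 h1).resolve_right (pow_ne_zero _ X_ne_zero)
    subst hg
    have hz : (z : M) = 0 := by simpa using congrArg Prod.snd h'
    exact Prod.ext rfl (Subtype.ext hz)
  have hθ_surj : Function.Surjective θ := by
    rintro ⟨x, hx⟩
    obtain ⟨g, z, hz, rfl⟩ := hdecomp x hx
    exact ⟨(g, ⟨z, hz⟩), rfl⟩
  let e := LinearEquiv.ofBijective θ ⟨hθ_inj, hθ_surj⟩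
  refine (hK.prod (p + a * d)).of_linearEquiv e.symm fun m x => ?_
  obtain ⟨⟨g, z⟩, rfl⟩ := e.surjective x
  simp only [LinearEquiv.symm_apply_apply, mem_inducedGrading, Submodule.mem_prod]
  rw [show ((e (g, z) : N) : k[X] × M) = g • y + ((0 : k[X]), (z : M)) from rfl]
  simp only [Prod.fst_add, Prod.snd_add, Prod.smul_fst, Prod.smul_snd, hy1, smul_eq_mul,
    add_zero, mul_X_pow_mem_freeGrading_iff]
  refine and_congr_right fun hg => ?_
  have hgy := smul_mem_of_mem_freeGrading hX hg hyG
  exact ⟨fun h => by simpa using (𝓜 m).sub_mem h hgy, fun hz => add_mem hgy hz⟩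

theorem IsGradedSubmodule.isGradedFree_of_comap_inr (hd : d ≠ 0)
    (hX : ∀ m, ∀ v ∈ 𝓜 m, (X : k[X]) • v ∈ 𝓜 (m + d))
    (hN : IsGradedSubmodule (fun m => (freeGrading k d p m).prod (𝓜 m)) N)
    (hK : IsGradedSubmodule 𝓜 (N.comap (LinearMap.inr k[X] k[X] M)) →
      IsGradedFree d (inducedGrading 𝓜 (N.comap (LinearMap.inr k[X] k[X] M)))) :
    IsGradedFree d (inducedGrading (fun m => (freeGrading k d p m).prod (𝓜 m)) N) := by
  by_cases h : ∃ m, ∃ x ∈ N, x ∈ (freeGrading k d p m).prod (𝓜 m) ∧ x.1 ≠ 0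
  · obtain ⟨a, y, hyN, hyG, hy1, hdvd⟩ := exists_mem_fst_eq_X_pow_forall_dvd hd h
    have hhom : ∀ m, ∀ x ∈ N, x ∈ (freeGrading k d p m).prod (𝓜 m) →
        ∃ g ∈ freeGrading k d (p + a * d) m, x.1 = g * y.1 := by
      intro m x hxN hxG
      obtain ⟨g, hg⟩ := hdvd m x hxN hxG
      refine ⟨g, ?_, by rw [hg, hy1, mul_comm]⟩
      rw [← mul_X_pow_mem_freeGrading_iff, mul_comm, ← hg]
      exact hxG.1
    have hdecomp := fun x (hx : x ∈ N) => hN.exists_eq_smul_add hX hyN hyG.2 hhom hx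
    refine (hK (isGradedSubmodule_comap_inr (Or.inr ?_) hdecomp)).prod_of_comap_inr hX hyN hy1
      hyG.2 fun x hx => ?_
    · simp [hy1, X_ne_zero]
    · obtain ⟨g, z, hz, hx_eq⟩ := hdecomp x hx
      have hle : (⨆ m, (N.comap (LinearMap.inr k[X] k[X] M)).restrictScalars k ⊓ 𝓜 m) ≤
          (N.comap (LinearMap.inr k[X] k[X] M)).restrictScalars k := iSup_le fun _ => inf_le_left
      exact ⟨g, z, hle hz, hx_eq⟩
  · push Not at h
    have hdecomp := fun x (hx : x ∈ N) => hN.exists_eq_smul_add hX (zero_mem N) (q := 0)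
      (zero_mem _) (fun m x hxN hxG => ⟨0, zero_mem _, by simp [h m x hxN hxG]⟩) hx
    refine (hK (isGradedSubmodule_comap_inr (Or.inl rfl) hdecomp)).of_comap_inr fun x hx => ?_
    obtain ⟨g, z, -, rfl⟩ := hdecomp x hx
    simp

end Splitting

theorem isGradedFree_of_isGradedSubmodule_pi {d : ℤ} (hd : d ≠ 0) {n : ℕ} (ps : Fin n → ℤ)
    (N : Submodule k[X] (Fin n → k[X])) (hN : IsGradedSubmodule (freePiGrading k d ps) N) :
    IsGradedFree d (inducedGrading (freePiGrading k d ps) N) := by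
  induction n with
  | zero => exact isGradedFree_of_subsingleton
  | succ n ih =>
    let E := (Fin.consLinearEquiv k[X] fun _ : Fin (n + 1) => k[X]).symm
    have hE : ∀ m x, x ∈ freePiGrading k d ps m ↔
        E x ∈ (freeGrading k d (ps 0) m).prod (freePiGrading k d (Fin.tail ps) m) := fun m x => by
      rw [← consLinearEquiv_mem_freePiGrading_iff, LinearEquiv.apply_symm_apply]
    exact IsGradedFree.of_map E hE <| (hN.map E hE).isGradedFree_of_comap_inr hd
      X_smul_mem_freePiGrading (ih _ _)

theorem mem_freeSumGrading_iff_linearEquivFunOnFintype {d : ℤ} {n : ℕ} {ps : Fin n → ℤ} (m : ℤ)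
    (x : ⨁ _i : Fin n, k[X]) :
    x ∈ freeSumGrading k d n ps m ↔
      DirectSum.linearEquivFunOnFintype k[X] (Fin n) (fun _ => k[X]) x ∈
        freePiGrading k d ps m := by
  simp only [freeSumGrading, Submodule.mem_iInf, Submodule.mem_comap, mem_freePiGrading]
  exact forall_congr' fun i => by rw [← DirectSum.apply_eq_component]; rfl

variable (k)

theorem stmt_11 (d : ℤ) (hd : d ≠ 0) (n₀ : ℕ) (ps : Fin n₀ → ℤ)
    (N : Submodule (Polynomial k) (⨁ _i : Fin n₀, Polynomial k))
    (hgraded : N.restrictScalars k =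
      ⨆ m : ℤ, (N.restrictScalars k ⊓ freeSumGrading k d n₀ ps m)) :
    ∃ (n₁ : ℕ) (ps' : Fin n₁ → ℤ)
      (e : N ≃ₗ[Polynomial k] ⨁ _i : Fin n₁, Polynomial k),
      ∀ (m : ℤ) (x : N),
        (x : ⨁ _i : Fin n₀, Polynomial k) ∈ freeSumGrading k d n₀ ps m ↔
          e x ∈ freeSumGrading k d n₁ ps' m := by
  have hΦ := mem_freeSumGrading_iff_linearEquivFunOnFintype (k := k) (d := d) (ps := ps)
  obtain ⟨n₁, ps', e, he⟩ := IsGradedFree.of_map _ hΦ <|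
    isGradedFree_of_isGradedSubmodule_pi hd ps _ (IsGradedSubmodule.map _ hΦ hgraded.le)
  refine ⟨n₁, ps', e.trans (DirectSum.linearEquivFunOnFintype _ _ _).symm, fun m x => ?_⟩
  refine (he m x).trans ?_
  rw [LinearEquiv.trans_apply, mem_freeSumGrading_iff_linearEquivFunOnFintype,
    LinearEquiv.apply_symm_apply]

end
end
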